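/- arXiv:2006.04417 — 14 statements merged into one kernel-verified Lean document; each statement's English description precedes it below -/
import Mathlib

section
/- Let (P,≤,',0,1) be a bounded distributive poset with an antitone involution and let a,b ∈ P with a ≤ b and L(b,a') = {0}. Then L(a,a') = L(b,b') = {0} and U(a,a') = U(b,b') = {1}. -/
/-- Let (P,≤,',0,1) be a bounded distributive poset with an antitone involution and
a,b ∈ P with a ≤ b and L(b,a') = {0}. Then L(a,a') = L(b,b') = {0} and
U(a,a') = U(b,b') = {1}. -/
theorem stmt_0 {P : Type*} [PartialOrder P] (f : P → P) (bot top : P)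
    (hbot : ∀ x : P, bot ≤ x) (htop : ∀ x : P, x ≤ top)
    (hinv : ∀ x : P, f (f x) = x)
    (hanti : ∀ x y : P, x ≤ y → f y ≤ f x)
    (hdist : ∀ x y z : P,
      lowerBounds (upperBounds {x, y} ∪ {z}) =
        lowerBounds (upperBounds (lowerBounds {x, z} ∪ lowerBounds {y, z})))
    (a b : P) (hab : a ≤ b)
    (h : lowerBounds {b, f a} = {bot}) :
    lowerBounds {a, f a} = {bot} ∧ lowerBounds {b, f b} = {bot} ∧
      upperBounds {a, f a} = {top} ∧ upperBounds {b, f b} = {top} := by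
  have hk : ∀ x : P, x ≤ b → x ≤ f a → x = bot := by
    intro x h1 h2
    have hx : x ∈ lowerBounds {b, f a} := by
      simp [lowerBounds_insert, lowerBounds_singleton, h1, h2]
    rw [h] at hx
    exact hx
  have hfb : f b ≤ f a := hanti _ _ hab
  have ftop : f bot = top := by
    refine le_antisymm (htop _) ?_
    have := hanti _ _ (hbot (f top))
    rwa [hinv] at this
  refine ⟨?_, ?_, ?_, ?_⟩
  · ext x
    simp only [lowerBounds_insert, lowerBounds_singleton, Set.mem_inter_iff,
      Set.mem_Iic, Set.mem_singleton_iff]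
    constructor
    · rintro ⟨h1, h2⟩; exact hk x (h1.trans hab) h2
    · rintro rfl; exact ⟨hbot _, hbot _⟩
  · ext x
    simp only [lowerBounds_insert, lowerBounds_singleton, Set.mem_inter_iff,
      Set.mem_Iic, Set.mem_singleton_iff]
    constructor
    · rintro ⟨h1, h2⟩; exact hk x h1 (h2.trans hfb)
    · rintro rfl; exact ⟨hbot _, hbot _⟩
  · ext x
    simp only [upperBounds_insert, upperBounds_singleton, Set.mem_inter_iff,
      Set.mem_Ici, Set.mem_singleton_iff]
    constructor
    · rintro ⟨h1, h2⟩
      have hfx1 : f x ≤ a := by have := hanti _ _ h2; rwa [hinv] at this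
      have hfx2 : f x ≤ f a := hanti _ _ h1
      have : f x = bot := hk _ (hfx1.trans hab) hfx2
      have := congrArg f this
      rwa [hinv, ftop] at this
    · rintro rfl; exact ⟨htop _, htop _⟩
  · ext x
    simp only [upperBounds_insert, upperBounds_singleton, Set.mem_inter_iff,
      Set.mem_Ici, Set.mem_singleton_iff]
    constructor
    · rintro ⟨h1, h2⟩
      have hfx1 : f x ≤ b := by have := hanti _ _ h2; rwa [hinv] at this
      have hfx2 : f x ≤ f a := (hanti _ _ h1).trans hfb
      have : f x = bot := hk _ hfx1 hfx2
      have := congrArg f this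
      rwa [hinv, ftop] at this
    · rintro rfl; exact ⟨htop _, htop _⟩
end

section
/- Let (P,≤,') be a poset with an antitone involution. Then for all subsets A,B ⊆ P: L(A ∪ U(A')) ⊆ ⋃_{x ∈ L(A)} L(x,x') and U(L(B) ∪ B') ⊆ ⋃_{y ∈ U(B')} U(y,y'). -/
/-- In a poset with an antitone involution, L(A ∪ U(A')) ⊆ ⋃_{x ∈ L(A)} L(x,x') and
U(L(B) ∪ B') ⊆ ⋃_{y ∈ U(B')} U(y,y'). -/
theorem stmt_2 {P : Type*} [PartialOrder P] (f : P → P)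
    (hinv : ∀ x : P, f (f x) = x)
    (hanti : ∀ x y : P, x ≤ y → f y ≤ f x)
    (A B : Set P) :
    (lowerBounds (A ∪ upperBounds (f '' A)) ⊆ ⋃ x ∈ lowerBounds A, lowerBounds {x, f x}) ∧
    (upperBounds (lowerBounds B ∪ f '' B) ⊆ ⋃ y ∈ upperBounds (f '' B), upperBounds {y, f y}) := by
  constructor
  · intro z hz
    have hzA : z ∈ lowerBounds A := fun a ha => hz (Set.mem_union_left _ ha)
    have hfz : f z ∈ upperBounds (f '' A) := by
      rintro _ ⟨a, ha, rfl⟩; exact hanti _ _ (hzA ha)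
    have hle : z ≤ f z := hz (Set.mem_union_right _ hfz)
    refine Set.mem_biUnion hzA ?_
    rintro w (rfl | rfl)
    · exact le_refl _
    · exact hle
  · intro z hz
    have hzB : z ∈ upperBounds (f '' B) := fun a ha => hz (Set.mem_union_right _ ha)
    have hfz : f z ∈ lowerBounds B := by
      intro b hb
      have := hanti _ _ (hzB ⟨b, hb, rfl⟩)
      rwa [hinv] at this
    have hle : f z ≤ z := hz (Set.mem_union_left _ hfz)
    refine Set.mem_biUnion hzB ?_
    rintro w (rfl | rfl)
    · exact le_refl _
    · exact hle
end

section
/- Let (P,≤,') be a poset with an antitone involution. Then P is a pseudo-Kleene poset if and only if for all subsets A,B ⊆ P one has L(A ∪ U(A')) ≤ U(L(B) ∪ B'). (This latter condition is exactly the statement that the Dedekind-MacNeille completion of P, with the involution L(A) ↦ L(A'), is a pseudo-Kleene algebra.) -/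
/-- A poset with an antitone involution is a pseudo-Kleene poset iff
L(A ∪ U(A')) ≤ U(L(B) ∪ B') for all subsets A, B, i.e. iff its
Dedekind-MacNeille completion is a pseudo-Kleene algebra. -/
theorem stmt_3 {P : Type*} [PartialOrder P] (f : P → P)
    (hinv : ∀ x : P, f (f x) = x)
    (hanti : ∀ x y : P, x ≤ y → f y ≤ f x) :
    (∀ x y : P, ∀ u ∈ lowerBounds {x, f x}, ∀ v ∈ upperBounds {y, f y}, u ≤ v) ↔
    (∀ A B : Set P, ∀ u ∈ lowerBounds (A ∪ upperBounds (f '' A)),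
      ∀ v ∈ upperBounds (lowerBounds B ∪ f '' B), u ≤ v) := by
  constructor
  · intro h A B u hu v hv
    -- u ≤ f u : f u is an upper bound of f '' A
    have hufu : u ≤ f u := by
      apply hu
      right
      rintro _ ⟨a, ha, rfl⟩
      exact hanti u a (hu (Or.inl ha))
    -- f v ≤ v : f v is a lower bound of B
    have hfvv : f v ≤ v := by
      apply hv
      left
      intro b hb
      have : f b ≤ v := hv (Or.inr ⟨b, hb, rfl⟩)
      have := hanti _ _ this
      rwa [hinv] at this
    refine h u v u ?_ v ?_
    · rintro z (rfl | rfl)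
      · exact le_refl _
      · exact hufu
    · rintro z (rfl | rfl)
      · exact le_refl _
      · exact hfvv
  · intro h x y u hu v hv
    have hux : u ≤ x := hu (Or.inl rfl)
    have hufx : u ≤ f x := hu (Or.inr rfl)
    have hvy : y ≤ v := hv (Or.inl rfl)
    have hvfy : f y ≤ v := hv (Or.inr rfl)
    refine h {x} {f y} u ?_ v ?_
    · rintro z (rfl | hz)
      · exact hux
      · exact le_trans hufx (hz ⟨x, rfl, rfl⟩)
    · rintro z (hz | ⟨b, rfl, rfl⟩)
      · exact le_trans (hz rfl) hvfy
      · rw [hinv]; exact hvy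
end

section
/- Let (P,≤) be a downward directed poset, ' a unary operation on P, and ⊓ a meet-directoid assigned to (P,≤). Then ' is an antitone involution on P if and only if the identities (1) x'' = x and (2) (x⊓y)'⊓y' = y' hold for all x,y ∈ P. -/
/-- A unary operation on a downward directed poset with an assigned meet-directoid ⊓
is an antitone involution iff the identities (1) x'' = x and (2) (x⊓y)'⊓y' = y' hold. -/
theorem stmt_4 {P : Type*} [PartialOrder P]
    (hdir : ∀ x y : P, ∃ z : P, z ≤ x ∧ z ≤ y)
    (m : P → P → P)
    (hcomm : ∀ x y : P, m x y = m y x)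
    (hmle : ∀ x y : P, x ≤ y → m x y = x)
    (hmlow : ∀ x y : P, m x y ≤ x ∧ m x y ≤ y)
    (f : P → P) :
    ((∀ x : P, f (f x) = x) ∧ (∀ x y : P, x ≤ y → f y ≤ f x)) ↔
    ((∀ x : P, f (f x) = x) ∧ (∀ x y : P, m (f (m x y)) (f y) = f y)) := by
  constructor
  · rintro ⟨hinv, hanti⟩
    refine ⟨hinv, fun x y => ?_⟩
    have h : f y ≤ f (m x y) := hanti _ _ (hmlow x y).2
    rw [hcomm]; exact hmle _ _ h
  · rintro ⟨hinv, hid⟩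
    refine ⟨hinv, fun x y hxy => ?_⟩
    have h := hid x y
    rw [hmle x y hxy] at h
    calc f y = m (f x) (f y) := h.symm
      _ ≤ f x := (hmlow _ _).1
end

section
/- Let (P,≤) be a downward directed poset, ' a unary operation on P, and ⊓ a meet-directoid assigned to (P,≤), with x⊔y := (x'⊓y')'. Then (P,≤,') is a pseudo-Kleene poset if and only if the identities (1) x'' = x, (2) (x⊓y)'⊓y' = y', and (3) (z⊓x)⊓(z⊓x') ≤ (w⊔y)⊔(w⊔y') hold for all x,y,z,w ∈ P. -/
/-- The induced join of a meet-directoid with a unary operation: x⊔y := (x'⊓y')'. -/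
def dJoin {P : Type*} (m : P → P → P) (f : P → P) (x y : P) : P := f (m (f x) (f y))

/-- A downward directed poset with a unary operation and an assigned meet-directoid
is a pseudo-Kleene poset iff the identities (1) x'' = x, (2) (x⊓y)'⊓y' = y' and
(3) (z⊓x)⊓(z⊓x') ≤ (w⊔y)⊔(w⊔y') hold. -/
theorem stmt_5 {P : Type*} [PartialOrder P]
    (hdir : ∀ x y : P, ∃ z : P, z ≤ x ∧ z ≤ y)
    (m : P → P → P)
    (hcomm : ∀ x y : P, m x y = m y x)
    (hmle : ∀ x y : P, x ≤ y → m x y = x)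
    (hmlow : ∀ x y : P, m x y ≤ x ∧ m x y ≤ y)
    (f : P → P) :
    ((∀ x : P, f (f x) = x) ∧ (∀ x y : P, x ≤ y → f y ≤ f x) ∧
      (∀ x y : P, ∀ u ∈ lowerBounds {x, f x}, ∀ v ∈ upperBounds {y, f y}, u ≤ v)) ↔
    ((∀ x : P, f (f x) = x) ∧ (∀ x y : P, m (f (m x y)) (f y) = f y) ∧
      (∀ x y z w : P,
        m (m z x) (m z (f x)) ≤ dJoin m f (dJoin m f w y) (dJoin m f w (f y)))) := by
  constructor
  · rintro ⟨hinv, hant, hk⟩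
    refine ⟨hinv, ?_, ?_⟩
    · intro x y
      rw [hcomm]
      exact hmle _ _ (hant _ _ (hmlow x y).2)
    · intro x y z w
      have hup : ∀ a b : P, a ≤ dJoin m f a b ∧ b ≤ dJoin m f a b := by
        intro a b
        constructor
        · have := hant _ _ (hmlow (f a) (f b)).1
          rwa [hinv] at this
        · have := hant _ _ (hmlow (f a) (f b)).2
          rwa [hinv] at this
      apply hk x y
      · intro b hb
        rcases hb with rfl | hb
        · exact le_trans (hmlow _ _).1 (hmlow z b).2
        · rw [Set.mem_singleton_iff] at hb; subst hb
          exact le_trans (hmlow _ _).2 (hmlow z (f x)).2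
      · intro b hb
        rcases hb with rfl | hb
        · exact le_trans (hup w b).2 (hup _ _).1
        · rw [Set.mem_singleton_iff] at hb; subst hb
          exact le_trans (hup w (f y)).2 (hup _ _).2
  · rintro ⟨hinv, h2, h3⟩
    have hant : ∀ x y : P, x ≤ y → f y ≤ f x := by
      intro x y hxy
      have h := h2 x y
      rw [hmle x y hxy] at h
      calc f y = m (f x) (f y) := h.symm
        _ ≤ f x := (hmlow _ _).1
    refine ⟨hinv, hant, ?_⟩
    intro x y u hu v hv
    have hux : u ≤ x := hu (Set.mem_insert _ _)
    have hufx : u ≤ f x := hu (Set.mem_insert_of_mem _ rfl)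
    have hyv : y ≤ v := hv (Set.mem_insert _ _)
    have hfyv : f y ≤ v := hv (Set.mem_insert_of_mem _ rfl)
    have h := h3 x y u v
    rw [hmle u x hux, hmle u (f x) hufx, hmle u u le_rfl] at h
    have e1 : dJoin m f v y = v := by
      unfold dJoin
      rw [hmle _ _ (hant _ _ hyv), hinv]
    have e2 : dJoin m f v (f y) = v := by
      unfold dJoin
      rw [hmle _ _ (hant _ _ hfyv), hinv]
    rw [e1, e2] at h
    unfold dJoin at h
    rwa [hmle _ _ le_rfl, hinv] at h
end

section
/- Let (P,≤) be a downward directed poset, ' a unary operation on P, and ⊓ a meet-directoid assigned to (P,≤), with x⊔y := (x'⊓y')'. Then (P,≤,') is a Kleene poset if and only if the identities (1) x'' = x, (2) (x⊓y)'⊓y' = y', (3) (z⊓x)⊓(z⊓x') ≤ (w⊔y)⊔(w⊔y') (for all x,y,z,w ∈ P) hold together with the implication (4): for all x,y,z,w,s ∈ P, if w⊓((t⊔x)⊔(t⊔y)) = w for all t ∈ P, w⊓z = w, and s⊔((t⊓x)⊓(t⊓z)) = s and s⊔((t⊓y)⊓(t⊓z)) = s for all t ∈ P, then w ≤ s. 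-/
section Aux

variable {P : Type*} [PartialOrder P] (m : P → P → P) (f : P → P)

private lemma m_eq_iff (hmle : ∀ x y : P, x ≤ y → m x y = x)
    (hmlow : ∀ x y : P, m x y ≤ x ∧ m x y ≤ y) {w v : P} :
    m w v = w ↔ w ≤ v := by
  constructor
  · intro h; rw [← h]; exact (hmlow w v).2
  · exact hmle w v

private lemma f_le_f_iff (h1 : ∀ x : P, f (f x) = x)
    (hanti : ∀ x y : P, x ≤ y → f y ≤ f x) {x y : P} :
    f x ≤ f y ↔ y ≤ x := by
  constructor
  · intro h; have := hanti _ _ h; rwa [h1, h1] at this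
  · exact fun h => hanti _ _ h

private lemma dJoin_eq_iff (hmle : ∀ x y : P, x ≤ y → m x y = x)
    (hmlow : ∀ x y : P, m x y ≤ x ∧ m x y ≤ y)
    (h1 : ∀ x : P, f (f x) = x)
    (hanti : ∀ x y : P, x ≤ y → f y ≤ f x) {s u : P} :
    dJoin m f s u = s ↔ u ≤ s := by
  unfold dJoin
  constructor
  · intro h
    have h' : m (f s) (f u) = f s := by
      have := congrArg f h
      rwa [h1] at this
    have : f s ≤ f u := (m_eq_iff m hmle hmlow).mp h'
    exact (f_le_f_iff f h1 hanti).mp this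
  · intro h
    rw [hmle _ _ ((f_le_f_iff f h1 hanti).mpr h), h1]

private lemma le_dJoin_left (hmlow : ∀ x y : P, m x y ≤ x ∧ m x y ≤ y)
    (h1 : ∀ x : P, f (f x) = x)
    (hanti : ∀ x y : P, x ≤ y → f y ≤ f x) (x y : P) :
    x ≤ dJoin m f x y := by
  have := hanti _ _ (hmlow (f x) (f y)).1
  rwa [h1] at this

private lemma le_dJoin_right (hmlow : ∀ x y : P, m x y ≤ x ∧ m x y ≤ y)
    (h1 : ∀ x : P, f (f x) = x)
    (hanti : ∀ x y : P, x ≤ y → f y ≤ f x) (x y : P) :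
    y ≤ dJoin m f x y := by
  have := hanti _ _ (hmlow (f x) (f y)).2
  rwa [h1] at this

/-- The easy inclusion of distributivity, valid in any poset. -/
private lemma distrib_easy (x y z : P) :
    lowerBounds (upperBounds (lowerBounds {x, z} ∪ lowerBounds {y, z})) ⊆
      lowerBounds (upperBounds {x, y} ∪ {z}) := by
  apply lowerBounds_mono_set
  intro v hv
  rcases hv with hv | hv
  · intro u hu
    rcases hu with hu | hu
    · exact le_trans (hu (Set.mem_insert x {z})) (hv (Set.mem_insert x {y}))
    · exact le_trans (hu (Set.mem_insert y {z})) (hv (Set.mem_insert_of_mem x rfl))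
  · rcases hv with rfl
    intro u hu
    rcases hu with hu | hu
    · exact hu (Set.mem_insert_of_mem x rfl)
    · exact hu (Set.mem_insert_of_mem y rfl)

/-- The "upper part" condition of (4) characterizes lower bounds of upper bounds. -/
private lemma cond_up_iff (hcomm : ∀ x y : P, m x y = m y x)
    (hmle : ∀ x y : P, x ≤ y → m x y = x)
    (hmlow : ∀ x y : P, m x y ≤ x ∧ m x y ≤ y)
    (h1 : ∀ x : P, f (f x) = x)
    (hanti : ∀ x y : P, x ≤ y → f y ≤ f x) (x y w : P) :
    (∀ t : P, m w (dJoin m f (dJoin m f t x) (dJoin m f t y)) = w) ↔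
      w ∈ lowerBounds (upperBounds {x, y}) := by
  constructor
  · intro H v hv
    have hxv : x ≤ v := hv (by simp)
    have hyv : y ≤ v := hv (by simp)
    have e1 : dJoin m f v x = v := (dJoin_eq_iff m f hmle hmlow h1 hanti).mpr hxv
    have e2 : dJoin m f v y = v := (dJoin_eq_iff m f hmle hmlow h1 hanti).mpr hyv
    have e3 : dJoin m f v v = v := (dJoin_eq_iff m f hmle hmlow h1 hanti).mpr le_rfl
    have := H v
    rw [e1, e2, e3] at this
    exact (m_eq_iff m hmle hmlow).mp this
  · intro H t
    apply (m_eq_iff m hmle hmlow).mpr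
    apply H
    intro a ha
    rcases ha with rfl | ha
    · exact le_trans (le_dJoin_right m f hmlow h1 hanti t a)
        (le_dJoin_left m f hmlow h1 hanti _ _)
    · rcases ha with rfl
      exact le_trans (le_dJoin_right m f hmlow h1 hanti t a)
        (le_dJoin_right m f hmlow h1 hanti _ _)

/-- The "lower part" condition of (4) characterizes upper bounds of lower bounds. -/
private lemma cond_down_iff (hmle : ∀ x y : P, x ≤ y → m x y = x)
    (hmlow : ∀ x y : P, m x y ≤ x ∧ m x y ≤ y)
    (h1 : ∀ x : P, f (f x) = x)
    (hanti : ∀ x y : P, x ≤ y → f y ≤ f x) (x z s : P) :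
    (∀ t : P, dJoin m f s (m (m t x) (m t z)) = s) ↔
      s ∈ upperBounds (lowerBounds {x, z}) := by
  constructor
  · intro H u hu
    have hux : u ≤ x := hu (by simp)
    have huz : u ≤ z := hu (by simp)
    have e1 : m u x = u := hmle _ _ hux
    have e2 : m u z = u := hmle _ _ huz
    have e3 : m u u = u := hmle _ _ le_rfl
    have := H u
    rw [e1, e2, e3] at this
    exact (dJoin_eq_iff m f hmle hmlow h1 hanti).mp this
  · intro H t
    apply (dJoin_eq_iff m f hmle hmlow h1 hanti).mpr
    apply H
    intro a ha
    rcases ha with rfl | ha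
    · exact le_trans (hmlow _ _).1 (hmlow t a).2
    · rcases ha with rfl
      exact le_trans (hmlow _ _).2 (hmlow t a).2

end Aux

/-- A downward directed poset with a unary operation and an assigned meet-directoid
is a Kleene poset iff the identities (1) x'' = x, (2) (x⊓y)'⊓y' = y',
(3) (z⊓x)⊓(z⊓x') ≤ (w⊔y)⊔(w⊔y') and the implication (4) hold. -/
theorem stmt_6 {P : Type*} [PartialOrder P]
    (hdir : ∀ x y : P, ∃ z : P, z ≤ x ∧ z ≤ y)
    (m : P → P → P)
    (hcomm : ∀ x y : P, m x y = m y x)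
    (hmle : ∀ x y : P, x ≤ y → m x y = x)
    (hmlow : ∀ x y : P, m x y ≤ x ∧ m x y ≤ y)
    (f : P → P) :
    ((∀ x : P, f (f x) = x) ∧ (∀ x y : P, x ≤ y → f y ≤ f x) ∧
      (∀ x y : P, ∀ u ∈ lowerBounds {x, f x}, ∀ v ∈ upperBounds {y, f y}, u ≤ v) ∧
      (∀ x y z : P,
        lowerBounds (upperBounds {x, y} ∪ {z}) =
          lowerBounds (upperBounds (lowerBounds {x, z} ∪ lowerBounds {y, z})))) ↔
    ((∀ x : P, f (f x) = x) ∧ (∀ x y : P, m (f (m x y)) (f y) = f y) ∧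
      (∀ x y z w : P,
        m (m z x) (m z (f x)) ≤ dJoin m f (dJoin m f w y) (dJoin m f w (f y))) ∧
      (∀ x y z w s : P,
        (∀ t : P, m w (dJoin m f (dJoin m f t x) (dJoin m f t y)) = w) →
        m w z = w →
        (∀ t : P, dJoin m f s (m (m t x) (m t z)) = s) →
        (∀ t : P, dJoin m f s (m (m t y) (m t z)) = s) →
        w ≤ s)) := by
  constructor
  · rintro ⟨h1, hanti, hpk, hdist⟩
    refine ⟨h1, ?_, ?_, ?_⟩
    · -- identity (2)
      intro x y
      rw [hcomm]
      exact (m_eq_iff m hmle hmlow).mpr (hanti _ _ (hmlow x y).2)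
    · -- identity (3)
      intro x y z w
      apply hpk x y
      · intro a ha
        rcases ha with rfl | ha
        · exact le_trans (hmlow _ _).1 (hmlow z a).2
        · rcases ha with rfl
          exact le_trans (hmlow _ _).2 (hmlow z _).2
      · intro a ha
        rcases ha with rfl | ha
        · exact le_trans (le_dJoin_right m f hmlow h1 hanti w a)
            (le_dJoin_left m f hmlow h1 hanti _ _)
        · rcases ha with rfl
          exact le_trans (le_dJoin_right m f hmlow h1 hanti w _)
            (le_dJoin_right m f hmlow h1 hanti _ _)
    · -- implication (4)
      intro x y z w s Hu Hz Hx Hy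
      have hw1 : w ∈ lowerBounds (upperBounds {x, y}) :=
        (cond_up_iff m f hcomm hmle hmlow h1 hanti x y w).mp Hu
      have hwz : w ≤ z := (m_eq_iff m hmle hmlow).mp Hz
      have hw : w ∈ lowerBounds (upperBounds {x, y} ∪ {z}) := by
        rw [lowerBounds_union]
        exact ⟨hw1, by intro a ha; rcases ha with rfl; exact hwz⟩
      rw [hdist x y z] at hw
      apply hw
      rw [upperBounds_union]
      exact ⟨(cond_down_iff m f hmle hmlow h1 hanti x z s).mp Hx,
        (cond_down_iff m f hmle hmlow h1 hanti y z s).mp Hy⟩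
  · rintro ⟨h1, h2, h3, h4⟩
    have hanti : ∀ x y : P, x ≤ y → f y ≤ f x := by
      intro x y hxy
      have e := h2 x y
      rw [hmle x y hxy] at e
      rw [← e]
      exact (hmlow (f x) (f y)).1
    refine ⟨h1, hanti, ?_, ?_⟩
    · -- pseudo-Kleene
      intro x y u hu v hv
      have hux : u ≤ x := hu (by simp)
      have hufx : u ≤ f x := hu (by simp)
      have hyv : y ≤ v := hv (by simp)
      have hfyv : f y ≤ v := hv (by simp)
      have key := h3 x y u v
      rw [hmle _ _ hux, hmle _ _ hufx, hmle _ _ le_rfl,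
        (dJoin_eq_iff m f hmle hmlow h1 hanti).mpr hyv,
        (dJoin_eq_iff m f hmle hmlow h1 hanti).mpr hfyv,
        (dJoin_eq_iff m f hmle hmlow h1 hanti).mpr le_rfl] at key
      exact key
    · -- distributivity
      intro x y z
      apply Set.Subset.antisymm
      · intro w hw
        intro s hs
        rw [upperBounds_union] at hs
        rw [lowerBounds_union] at hw
        apply h4 x y z w s
        · exact (cond_up_iff m f hcomm hmle hmlow h1 hanti x y w).mpr hw.1
        · exact (m_eq_iff m hmle hmlow).mpr (hw.2 rfl)
        · exact (cond_down_iff m f hmle hmlow h1 hanti x z s).mpr hs.1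
        · exact (cond_down_iff m f hmle hmlow h1 hanti y z s).mpr hs.2
      · exact distrib_easy x y z
end

section
/- Every strong pseudo-Kleene poset is a pseudo-Kleene poset, i.e., if (P,≤,') is a poset with an antitone involution such that L(x,x') = L(y,y') whenever x and y are incomparable, then L(x,x') ≤ U(y,y') for all x,y ∈ P. -/
/-- Every strong pseudo-Kleene poset is a pseudo-Kleene poset. -/
theorem stmt_7 {P : Type*} [PartialOrder P] (f : P → P)
    (hinv : ∀ x : P, f (f x) = x)
    (hanti : ∀ x y : P, x ≤ y → f y ≤ f x)
    (hstrong : ∀ x y : P, ¬ x ≤ y → ¬ y ≤ x →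
      lowerBounds {x, f x} = lowerBounds {y, f y}) :
    ∀ x y : P, ∀ u ∈ lowerBounds {x, f x}, ∀ v ∈ upperBounds {y, f y}, u ≤ v := by
  intro x y u hu v hv
  have hux : u ≤ x := hu (by simp)
  have hufx : u ≤ f x := hu (by simp)
  have hyv : y ≤ v := hv (by simp)
  have hfyv : f y ≤ v := hv (by simp)
  by_cases hxy : x ≤ y
  · exact le_trans hux (le_trans hxy hyv)
  by_cases hyx : y ≤ x
  · have : f x ≤ f y := hanti _ _ hyx
    exact le_trans hufx (le_trans this hfyv)
  · have h := hstrong x y hxy hyx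
    have : u ∈ lowerBounds {y, f y} := h ▸ hu
    exact le_trans (this (by simp)) hyv
end

section
/- Let (P,≤) be a downward directed poset, ' a unary operation on P, and ⊓ a meet-directoid assigned to (P,≤). Then (P,≤,') is a strong pseudo-Kleene poset if and only if the identities (1) x'' = x and (2) (x⊓y)'⊓y' = y' hold together with the implication (5): for all x,y,z ∈ P, if x ≠ x⊓y and x⊓y ≠ y and x⊓z = z and x'⊓z = z, then y⊓z = z and y'⊓z = z. -/
/-- A downward directed poset with a unary operation and an assigned meet-directoid
is a strong pseudo-Kleene poset iff the identities (1) x'' = x, (2) (x⊓y)'⊓y' = y'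
and the implication (5) hold. -/
theorem stmt_8 {P : Type*} [PartialOrder P]
    (hdir : ∀ x y : P, ∃ z : P, z ≤ x ∧ z ≤ y)
    (m : P → P → P)
    (hcomm : ∀ x y : P, m x y = m y x)
    (hmle : ∀ x y : P, x ≤ y → m x y = x)
    (hmlow : ∀ x y : P, m x y ≤ x ∧ m x y ≤ y)
    (f : P → P) :
    ((∀ x : P, f (f x) = x) ∧ (∀ x y : P, x ≤ y → f y ≤ f x) ∧
      (∀ x y : P, ¬ x ≤ y → ¬ y ≤ x →
        lowerBounds {x, f x} = lowerBounds {y, f y})) ↔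
    ((∀ x : P, f (f x) = x) ∧ (∀ x y : P, m (f (m x y)) (f y) = f y) ∧
      (∀ x y z : P, x ≠ m x y → m x y ≠ y → m x z = z → m (f x) z = z →
        m y z = z ∧ m (f y) z = z)) := by
  have hle : ∀ x y : P, m x y = y ↔ y ≤ x := by
    intro x y
    constructor
    · intro h; rw [← h]; exact (hmlow x y).1
    · intro h; rw [hcomm]; exact hmle y x h
  constructor
  · rintro ⟨h1, h2, h3⟩
    refine ⟨h1, ?_, ?_⟩
    · intro x y
      exact (hle _ _).2 (h2 _ _ ((hmlow x y).2))
    · intro x y z hxy hyx hz1 hz2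
      have hnxy : ¬ x ≤ y := fun h => hxy (hmle x y h).symm
      have hnyx : ¬ y ≤ x := fun h => hyx ((hle x y).2 h)
      have hz : z ∈ lowerBounds {x, f x} := by
        intro w hw
        rcases hw with h | h
        · rw [h]; exact ((hle x z).1 hz1)
        · rw [Set.mem_singleton_iff] at h; rw [h]
          exact ((hle (f x) z).1 hz2)
      rw [h3 x y hnxy hnyx] at hz
      exact ⟨(hle y z).2 (hz (Set.mem_insert _ _)),
        (hle (f y) z).2 (hz (Set.mem_insert_of_mem _ rfl))⟩
  · rintro ⟨h1, h2, h5⟩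
    have hant : ∀ x y : P, x ≤ y → f y ≤ f x := by
      intro x y h
      have h' := (hle (f (m x y)) (f y)).1 (h2 x y)
      rwa [hmle x y h] at h'
    refine ⟨h1, hant, ?_⟩
    intro x y hxy hyx
    have key : ∀ a b : P, ¬ a ≤ b → ¬ b ≤ a →
        lowerBounds {a, f a} ⊆ lowerBounds {b, f b} := by
      intro a b hab hba z hz
      have hz1 : z ≤ a := hz (Set.mem_insert _ _)
      have hz2 : z ≤ f a := hz (Set.mem_insert_of_mem _ rfl)
      have h5' := h5 a b z (fun h => hab (by rw [h]; exact (hmlow a b).2))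
        (fun h => hba (by rw [← h]; exact (hmlow a b).1))
        ((hle a z).2 hz1) ((hle (f a) z).2 hz2)
      intro w hw
      rcases hw with h | h
      · rw [h]; exact (hle _ _).1 h5'.1
      · rw [Set.mem_singleton_iff] at h; rw [h]
        exact (hle _ _).1 h5'.2
    exact le_antisymm (key x y hxy hyx) (key y x hyx hxy)
end

section
/- Let (P,≤,0,1) be a bounded downward directed poset, ' a unary operation on P, and ⊓ a meet-directoid assigned to (P,≤). Then (P,≤,',0,1) is a strict pseudo-Kleene poset if and only if the identities (1) x'' = x and (2) (x⊓y)'⊓y' = y' hold together with the implication (6): for all x,y,z ∈ P, if x,y ∉ {0,1} and x⊓z = z and x'⊓z = z, then y⊓z = z and y'⊓z = z. -/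
/-- A bounded downward directed poset with a unary operation and an assigned
meet-directoid is a strict pseudo-Kleene poset iff the identities (1) x'' = x,
(2) (x⊓y)'⊓y' = y' and the implication (6) hold. -/
theorem stmt_9 {P : Type*} [PartialOrder P] (bot top : P)
    (hbot : ∀ x : P, bot ≤ x) (htop : ∀ x : P, x ≤ top)
    (hdir : ∀ x y : P, ∃ z : P, z ≤ x ∧ z ≤ y)
    (m : P → P → P)
    (hcomm : ∀ x y : P, m x y = m y x)
    (hmle : ∀ x y : P, x ≤ y → m x y = x)
    (hmlow : ∀ x y : P, m x y ≤ x ∧ m x y ≤ y)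
    (f : P → P) :
    ((∀ x : P, f (f x) = x) ∧ (∀ x y : P, x ≤ y → f y ≤ f x) ∧
      (∀ x y : P, x ≠ bot → x ≠ top → y ≠ bot → y ≠ top →
        lowerBounds {x, f x} = lowerBounds {y, f y})) ↔
    ((∀ x : P, f (f x) = x) ∧ (∀ x y : P, m (f (m x y)) (f y) = f y) ∧
      (∀ x y z : P, x ≠ bot → x ≠ top → y ≠ bot → y ≠ top →
        m x z = z → m (f x) z = z → m y z = z ∧ m (f y) z = z)) := by
  have key : ∀ a z : P, m a z = z ↔ z ≤ a := by
    intro a z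
    constructor
    · intro h; rw [← h]; exact (hmlow a z).1
    · intro h; rw [hcomm]; exact hmle z a h
  have memLB : ∀ a z : P, z ∈ lowerBounds ({a, f a} : Set P) ↔ z ≤ a ∧ z ≤ f a := by
    intro a z
    constructor
    · intro h; exact ⟨h (Set.mem_insert _ _), h (Set.mem_insert_of_mem _ rfl)⟩
    · rintro ⟨h1, h2⟩ w hw
      rcases hw with rfl | hw
      · exact h1
      · rw [Set.mem_singleton_iff] at hw; subst hw; exact h2
  constructor
  · rintro ⟨h1, h2, h3⟩
    refine ⟨h1, ?_, ?_⟩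
    · intro x y
      exact (key _ _).2 (h2 _ _ (hmlow x y).2)
    · intro x y z hx0 hx1 hy0 hy1 hxz hfxz
      have hz : z ∈ lowerBounds ({x, f x} : Set P) :=
        (memLB x z).2 ⟨(key x z).1 hxz, (key (f x) z).1 hfxz⟩
      rw [h3 x y hx0 hx1 hy0 hy1] at hz
      obtain ⟨hzy, hzfy⟩ := (memLB y z).1 hz
      exact ⟨(key y z).2 hzy, (key (f y) z).2 hzfy⟩
  · rintro ⟨h1, h2, h6⟩
    have anti : ∀ x y : P, x ≤ y → f y ≤ f x := by
      intro x y hxy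
      have := h2 x y
      rw [hmle x y hxy] at this
      exact (key _ _).1 this
    refine ⟨h1, anti, ?_⟩
    intro x y hx0 hx1 hy0 hy1
    ext z
    rw [memLB, memLB]
    constructor
    · rintro ⟨ha, hb⟩
      obtain ⟨c, d⟩ := h6 x y z hx0 hx1 hy0 hy1 ((key x z).2 ha) ((key (f x) z).2 hb)
      exact ⟨(key y z).1 c, (key (f y) z).1 d⟩
    · rintro ⟨ha, hb⟩
      obtain ⟨c, d⟩ := h6 y x z hy0 hy1 hx0 hx1 ((key y z).2 ha) ((key (f y) z).2 hb)
      exact ⟨(key x z).1 c, (key (f x) z).1 d⟩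
end

section
/- Let (P,≤,0,1) be a bounded downward directed poset, ' a unary operation on P, and ⊓ a meet-directoid assigned to (P,≤), with x⊔y := (x'⊓y')'. Then (P,≤,',0,1) is a strict Kleene poset if and only if the identities (1) x'' = x and (2) (x⊓y)'⊓y' = y' hold together with the implications (4): for all x,y,z,w,s ∈ P, if w⊓((t⊔x)⊔(t⊔y)) = w for all t ∈ P, w⊓z = w, and s⊔((t⊓x)⊓(t⊓z)) = s and s⊔((t⊓y)⊓(t⊓z)) = s for all t ∈ P, then w ≤ s; and (6): for all x,y,z ∈ P, if x,y ∉ {0,1} and x⊓z = z and x'⊓z = z, then y⊓z = z and y'⊓z = z. -/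
/-- A bounded downward directed poset with a unary operation and an assigned
meet-directoid is a strict Kleene poset iff the identities (1) x'' = x,
(2) (x⊓y)'⊓y' = y' and the implications (4) and (6) hold. -/
theorem stmt_10 {P : Type*} [PartialOrder P] (bot top : P)
    (hbot : ∀ x : P, bot ≤ x) (htop : ∀ x : P, x ≤ top)
    (hdir : ∀ x y : P, ∃ z : P, z ≤ x ∧ z ≤ y)
    (m : P → P → P)
    (hcomm : ∀ x y : P, m x y = m y x)
    (hmle : ∀ x y : P, x ≤ y → m x y = x)
    (hmlow : ∀ x y : P, m x y ≤ x ∧ m x y ≤ y)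
    (f : P → P) :
    ((∀ x : P, f (f x) = x) ∧ (∀ x y : P, x ≤ y → f y ≤ f x) ∧
      (∀ x y : P, x ≠ bot → x ≠ top → y ≠ bot → y ≠ top →
        lowerBounds {x, f x} = lowerBounds {y, f y}) ∧
      (∀ x y z : P,
        lowerBounds (upperBounds {x, y} ∪ {z}) =
          lowerBounds (upperBounds (lowerBounds {x, z} ∪ lowerBounds {y, z})))) ↔
    ((∀ x : P, f (f x) = x) ∧ (∀ x y : P, m (f (m x y)) (f y) = f y) ∧
      (∀ x y z w s : P,
        (∀ t : P, m w (dJoin m f (dJoin m f t x) (dJoin m f t y)) = w) →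
        m w z = w →
        (∀ t : P, dJoin m f s (m (m t x) (m t z)) = s) →
        (∀ t : P, dJoin m f s (m (m t y) (m t z)) = s) →
        w ≤ s) ∧
      (∀ x y z : P, x ≠ bot → x ≠ top → y ≠ bot → y ≠ top →
        m x z = z → m (f x) z = z → m y z = z ∧ m (f y) z = z)) := by
  -- basic meet facts
  have meet_eq_left : ∀ x y : P, m x y = x ↔ x ≤ y := by
    intro x y
    constructor
    · intro h; have := (hmlow x y).2; rwa [h] at this
    · intro h; exact hmle x y h
  have meet_eq_right : ∀ x y : P, m x y = y ↔ y ≤ x := by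
    intro x y
    constructor
    · intro h; have := (hmlow x y).1; rwa [h] at this
    · intro h; rw [hcomm]; exact hmle y x h
  have mem_lb : ∀ a b z : P, z ∈ lowerBounds {a, b} ↔ z ≤ a ∧ z ≤ b := by
    intro a b z
    constructor
    · intro h
      exact ⟨h (Set.mem_insert _ _), h (Set.mem_insert_of_mem _ rfl)⟩
    · rintro ⟨h1, h2⟩ c hc
      rcases hc with rfl | hc
      · exact h1
      · rw [Set.mem_singleton_iff] at hc; subst hc; exact h2
  constructor
  · rintro ⟨h1, h2, h3, h4⟩
    -- join facts from antitone involution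
    have jub : ∀ x y : P, x ≤ dJoin m f x y ∧ y ≤ dJoin m f x y := by
      intro x y
      constructor
      · have := h2 _ _ (hmlow (f x) (f y)).1
        rw [h1] at this; exact this
      · have := h2 _ _ (hmlow (f x) (f y)).2
        rw [h1] at this; exact this
    have jeq : ∀ x y : P, y ≤ x → dJoin m f x y = x := by
      intro x y h
      unfold dJoin
      rw [hmle (f x) (f y) (h2 _ _ h), h1]
    refine ⟨h1, ?_, ?_, ?_⟩
    · intro x y
      rw [hcomm]
      exact hmle _ _ (h2 _ _ (hmlow x y).2)
    · -- implication (4) from distributivity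
      intro x y z w s H1 H2 H3 H4
      have hw : w ∈ lowerBounds (upperBounds {x, y} ∪ {z}) := by
        intro a ha
        rcases ha with ha | ha
        · have hax : x ≤ a := ha (Set.mem_insert _ _)
          have hay : y ≤ a := ha (Set.mem_insert_of_mem _ rfl)
          have := H1 a
          rw [jeq a x hax, jeq a y hay, jeq a a le_rfl] at this
          exact (meet_eq_left w a).mp this
        · rw [Set.mem_singleton_iff] at ha; subst ha
          exact (meet_eq_left w a).mp H2
      rw [h4 x y z] at hw
      apply hw
      -- s is an upper bound of L(x,z) ∪ L(y,z)
      intro a ha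
      rcases ha with ha | ha
      · rw [mem_lb] at ha
        have := H3 a
        rw [hmle a x ha.1, hmle a z ha.2, hmle a a le_rfl] at this
        have h' : a ≤ dJoin m f s a := (jub s a).2
        rw [this] at h'; exact h'
      · rw [mem_lb] at ha
        have := H4 a
        rw [hmle a y ha.1, hmle a z ha.2, hmle a a le_rfl] at this
        have h' : a ≤ dJoin m f s a := (jub s a).2
        rw [this] at h'; exact h'
    · -- implication (6) from strictness
      intro x y z hx1 hx2 hy1 hy2 hz1 hz2
      have hz : z ∈ lowerBounds {x, f x} := by
        rw [mem_lb]
        exact ⟨(meet_eq_right x z).mp hz1, (meet_eq_right (f x) z).mp hz2⟩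
      rw [h3 x y hx1 hx2 hy1 hy2, mem_lb] at hz
      exact ⟨(meet_eq_right y z).mpr hz.1, (meet_eq_right (f y) z).mpr hz.2⟩
  · rintro ⟨h1, h2, h4, h6⟩
    -- antitone from (1) and (2)
    have hant : ∀ x y : P, x ≤ y → f y ≤ f x := by
      intro x y hxy
      have := h2 x y
      rw [hmle x y hxy] at this
      have h' := (hmlow (f x) (f y)).1
      rwa [this] at h'
    have jub : ∀ x y : P, x ≤ dJoin m f x y ∧ y ≤ dJoin m f x y := by
      intro x y
      constructor
      · have := hant _ _ (hmlow (f x) (f y)).1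
        rw [h1] at this; exact this
      · have := hant _ _ (hmlow (f x) (f y)).2
        rw [h1] at this; exact this
    have jeq : ∀ x y : P, y ≤ x → dJoin m f x y = x := by
      intro x y h
      unfold dJoin
      rw [hmle (f x) (f y) (hant _ _ h), h1]
    refine ⟨h1, hant, ?_, ?_⟩
    · -- strictness from (6)
      intro x y hx1 hx2 hy1 hy2
      ext z
      rw [mem_lb, mem_lb]
      constructor
      · rintro ⟨za, zb⟩
        have := h6 x y z hx1 hx2 hy1 hy2 ((meet_eq_right x z).mpr za)
          ((meet_eq_right (f x) z).mpr zb)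
        exact ⟨(meet_eq_right y z).mp this.1, (meet_eq_right (f y) z).mp this.2⟩
      · rintro ⟨za, zb⟩
        have := h6 y x z hy1 hy2 hx1 hx2 ((meet_eq_right y z).mpr za)
          ((meet_eq_right (f y) z).mpr zb)
        exact ⟨(meet_eq_right x z).mp this.1, (meet_eq_right (f x) z).mp this.2⟩
    · -- distributivity from (4)
      intro x y z
      apply Set.Subset.antisymm
      · intro w hw
        intro s hs
        apply h4 x y z w s
        · intro t
          apply (meet_eq_left w _).mpr
          apply hw
          left
          intro a ha
          rcases ha with rfl | ha
          · exact le_trans (jub t a).2 (jub _ _).1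
          · rw [Set.mem_singleton_iff] at ha; subst ha
            exact le_trans (jub t a).2 (jub _ _).2
        · exact (meet_eq_left w z).mpr (hw (Or.inr rfl))
        · intro t
          apply jeq
          apply hs
          left
          rw [mem_lb]
          exact ⟨le_trans (hmlow _ _).1 (hmlow t x).2,
            le_trans (hmlow _ _).2 (hmlow t z).2⟩
        · intro t
          apply jeq
          apply hs
          right
          rw [mem_lb]
          exact ⟨le_trans (hmlow _ _).1 (hmlow t y).2,
            le_trans (hmlow _ _).2 (hmlow t z).2⟩
      · -- trivial inclusion
        intro w hw u hu
        apply hw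
        rcases hu with hu | hu
        · intro a ha
          rcases ha with ha | ha
          · rw [mem_lb] at ha
            exact le_trans ha.1 (hu (Set.mem_insert _ _))
          · rw [mem_lb] at ha
            exact le_trans ha.1 (hu (Set.mem_insert_of_mem _ rfl))
        · rw [Set.mem_singleton_iff] at hu; subst hu
          intro a ha
          rcases ha with ha | ha
          · exact (mem_lb _ _ _).mp ha |>.2
          · exact (mem_lb _ _ _).mp ha |>.2
end

section
/- Let (P,≤,',0,1) be a bounded strict Kleene poset satisfying condition (7), and let ⊙ and → be defined by (R). Then adjointness holds: for all x,y,z ∈ P, (u ≤ z for every u ∈ x⊙y) if and only if (x ≤ v for every v ∈ y→z). -/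
private lemma mem_lb_pair {P : Type*} [PartialOrder P] {a b u : P} :
    u ∈ lowerBounds {a, b} ↔ u ≤ a ∧ u ≤ b := by
  simp [lowerBounds]

private lemma mem_ub_pair {P : Type*} [PartialOrder P] {a b u : P} :
    u ∈ upperBounds {a, b} ↔ a ≤ u ∧ b ≤ u := by
  simp [upperBounds]

/-- In a bounded strict Kleene poset satisfying (7), the operators ⊙ and → defined
by (R) satisfy adjointness: x⊙y ≤ z iff x ≤ y→z. -/
theorem stmt_11 {P : Type*} [PartialOrder P] (f : P → P) (bot top : P)
    (hbot : ∀ x : P, bot ≤ x) (htop : ∀ x : P, x ≤ top)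
    (hinv : ∀ x : P, f (f x) = x)
    (hanti : ∀ x y : P, x ≤ y → f y ≤ f x)
    (hstrict : ∀ x y : P, x ≠ bot → x ≠ top → y ≠ bot → y ≠ top →
      lowerBounds {x, f x} = lowerBounds {y, f y})
    (hdist : ∀ x y z : P,
      lowerBounds (upperBounds {x, y} ∪ {z}) =
        lowerBounds (upperBounds (lowerBounds {x, z} ∪ lowerBounds {y, z})))
    (h7 : ∀ x y : P, x ≠ bot → y ≠ bot → lowerBounds {x, y} ≠ {bot})
    (odot arrow : P → P → Set P)
    (hodot1 : ∀ x y : P, x ≤ f y → odot x y = {bot})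
    (hodot2 : ∀ x y : P, ¬ x ≤ f y → odot x y = lowerBounds {x, y})
    (harrow1 : ∀ x y : P, x ≤ y → arrow x y = {top})
    (harrow2 : ∀ x y : P, ¬ x ≤ y → arrow x y = upperBounds {f x, y}) :
    ∀ x y z : P, (∀ u ∈ odot x y, u ≤ z) ↔ (∀ v ∈ arrow y z, x ≤ v) := by
  have hfbot : f bot = top := by
    refine le_antisymm (htop _) ?_
    have h := hanti bot (f top) (hbot _)
    rwa [hinv] at h
  intro x y z
  by_cases hxy' : x ≤ f y
  · rw [hodot1 x y hxy']
    constructor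
    · intro _
      by_cases hyz : y ≤ z
      · rw [harrow1 y z hyz]
        intro v hv
        rw [Set.mem_singleton_iff] at hv
        rw [hv]; exact htop x
      · rw [harrow2 y z hyz]
        intro v hv
        exact hxy'.trans (mem_ub_pair.1 hv).1
    · intro _ u hu
      rw [Set.mem_singleton_iff] at hu
      rw [hu]; exact hbot z
  · rw [hodot2 x y hxy']
    have hyb : y ≠ bot := by
      rintro rfl
      exact hxy' (by rw [hfbot]; exact htop x)
    by_cases hyz : y ≤ z
    · rw [harrow1 y z hyz]
      constructor
      · intro _ v hv
        rw [Set.mem_singleton_iff] at hv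
        rw [hv]; exact htop x
      · intro _ u hu
        exact (mem_lb_pair.1 hu).2.trans hyz
    · rw [harrow2 y z hyz]
      constructor
      · -- forward: L(x,y) ⊆ ↓z  →  x ∈ L(U(f y, z))
        intro H v hv
        by_cases hxley : x ≤ y
        · exact (H x (mem_lb_pair.2 ⟨le_refl x, hxley⟩)).trans (mem_ub_pair.1 hv).2
        · have hxb : x ≠ bot := fun h => hxy' (h ▸ hbot (f y))
          have hxt : x ≠ top := by
            rintro rfl
            exact hyz (H y (mem_lb_pair.2 ⟨htop y, le_refl y⟩))
          have hyt : y ≠ top := fun h => hxley (h ▸ htop x)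
          -- key: x ≤ c for every c ∈ U(y, f y)
          have hkey : ∀ c : P, y ≤ c → f y ≤ c → x ≤ c := by
            intro c hyc hfyc
            have hfc : f c ∈ lowerBounds {y, f y} := by
              refine mem_lb_pair.2 ⟨?_, hanti _ _ hyc⟩
              · have := hanti _ _ hfyc
                rwa [hinv] at this
            have hs := hstrict y x hyb hyt hxb hxt
            have hfc' : f c ∈ lowerBounds {x, f x} := hs ▸ hfc
            have hfcfx : f c ≤ f x := (mem_lb_pair.1 hfc').2
            have := hanti _ _ hfcfx
            rwa [hinv, hinv] at this
          -- x ∈ L(U(L(f y, x) ∪ L(y, x)))  via hdist (f y) y x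
          have hx2 : x ∈ lowerBounds (upperBounds
              (lowerBounds {f y, x} ∪ lowerBounds {y, x})) := by
            rw [← hdist (f y) y x]
            intro c hc
            rcases hc with hc | hc
            · exact hkey c (mem_ub_pair.1 hc).2 (mem_ub_pair.1 hc).1
            · rw [Set.mem_singleton_iff] at hc; exact hc.ge
          -- x ∈ L(U(L(f y, x) ∪ L(z, x)))
          have hx1 : x ∈ lowerBounds (upperBounds
              (lowerBounds {f y, x} ∪ lowerBounds {z, x})) := by
            intro w hw
            refine hx2 ?_
            intro t ht
            rcases ht with ht | ht
            · exact hw (Or.inl ht)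
            · refine hw (Or.inr (mem_lb_pair.2 ⟨?_, (mem_lb_pair.1 ht).2⟩))
              exact H t (mem_lb_pair.2 ⟨(mem_lb_pair.1 ht).2, (mem_lb_pair.1 ht).1⟩)
          have hx0 : x ∈ lowerBounds (upperBounds {f y, z} ∪ {x}) := by
            rw [hdist (f y) z x]; exact hx1
          exact hx0 (Or.inl hv)
      · -- backward: x ∈ L(U(f y, z))  →  L(x,y) ⊆ ↓z
        intro H u hu
        obtain ⟨hux, huy⟩ := mem_lb_pair.1 hu
        have hzt : z ≠ top := fun h => hyz (h ▸ htop y)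
        have hzb : z ≠ bot := by
          rintro rfl
          exact hxy' (H (f y) (mem_ub_pair.2 ⟨le_refl _, hbot _⟩))
        -- L(f y, u) ⊆ ↓z
        have hsub : ∀ t : P, t ≤ f y → t ≤ u → t ≤ z := by
          intro t htfy htu
          by_cases hyt : y = top
          · have hft : f top = bot := by rw [← hfbot, hinv]
            rw [hyt, hft] at htfy
            exact htfy.trans (hbot z)
          · have ht : t ∈ lowerBounds {y, f y} :=
              mem_lb_pair.2 ⟨htu.trans huy, htfy⟩
            have hs := hstrict y z hyb hyt hzb hzt
            have ht' : t ∈ lowerBounds {z, f z} := hs ▸ ht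
            exact (mem_lb_pair.1 ht').1
        have hu1 : u ∈ lowerBounds (upperBounds {f y, z} ∪ {u}) := by
          intro c hc
          rcases hc with hc | hc
          · exact hux.trans (H c hc)
          · rw [Set.mem_singleton_iff] at hc; exact hc.ge
        have hu2 : u ∈ lowerBounds (upperBounds
            (lowerBounds {f y, u} ∪ lowerBounds {z, u})) := by
          rw [← hdist (f y) z u]; exact hu1
        refine hu2 ?_
        intro t ht
        rcases ht with ht | ht
        · exact hsub t (mem_lb_pair.1 ht).1 (mem_lb_pair.1 ht).2
        · exact (mem_lb_pair.1 ht).1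
end

section
/- Let (P,≤,',0,1) be a bounded strict Kleene poset satisfying condition (7), and let ⊙ be defined by (R). Then for all x,y,z ∈ P: x⊙y = y⊙x; x⊙1 = 1⊙x = L({x}); and ⋂_{u ∈ x⊙y} (u⊙z) = {0} = ⋂_{v ∈ y⊙z} (x⊙v), so ⊙ is associative with respect to the extension A⊙B := ⋂_{u∈A, v∈B} u⊙v. -/
/-- In a bounded strict Kleene poset satisfying (7), the operator ⊙ defined by (R)
is commutative, has 1 as a neutral element (x⊙1 = 1⊙x = L(x)) and is associative
with respect to the extension of ⊙ to subsets, both iterated products being {0}. -/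
theorem stmt_12 {P : Type*} [PartialOrder P] (f : P → P) (bot top : P)
    (hbot : ∀ x : P, bot ≤ x) (htop : ∀ x : P, x ≤ top)
    (hinv : ∀ x : P, f (f x) = x)
    (hanti : ∀ x y : P, x ≤ y → f y ≤ f x)
    (hstrict : ∀ x y : P, x ≠ bot → x ≠ top → y ≠ bot → y ≠ top →
      lowerBounds {x, f x} = lowerBounds {y, f y})
    (hdist : ∀ x y z : P,
      lowerBounds (upperBounds {x, y} ∪ {z}) =
        lowerBounds (upperBounds (lowerBounds {x, z} ∪ lowerBounds {y, z})))
    (h7 : ∀ x y : P, x ≠ bot → y ≠ bot → lowerBounds {x, y} ≠ {bot})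
    (odot : P → P → Set P)
    (hodot1 : ∀ x y : P, x ≤ f y → odot x y = {bot})
    (hodot2 : ∀ x y : P, ¬ x ≤ f y → odot x y = lowerBounds {x, y}) :
    (∀ x y : P, odot x y = odot y x) ∧
    (∀ x : P, odot x top = lowerBounds {x} ∧ odot top x = lowerBounds {x}) ∧
    (∀ x y z : P, (⋂ u ∈ odot x y, odot u z) = {bot} ∧
      (⋂ v ∈ odot y z, odot x v) = {bot}) := by

  have ftop : f top = bot := le_antisymm (by simpa [hinv] using hanti (f bot) top (htop _)) (hbot _)
  have fbot : f bot = top := by rw [← ftop, hinv]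
  have botmem : ∀ u z : P, bot ∈ odot u z := by
    intro u z
    by_cases h : u ≤ f z
    · simp [hodot1 u z h]
    · rw [hodot2 u z h]; intro a _; exact hbot a
  have lbbot : lowerBounds ({bot} : Set P) = {bot} := by
    ext a
    simp only [lowerBounds_singleton, Set.mem_Iic, Set.mem_singleton_iff]
    exact ⟨fun h => le_antisymm h (hbot a), fun h => h ▸ le_refl _⟩
  refine ⟨?_, ?_, ?_⟩
  · intro x y
    by_cases h : x ≤ f y
    · have h' : y ≤ f x := by simpa [hinv] using hanti x (f y) h
      rw [hodot1 x y h, hodot1 y x h']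
    · have h' : ¬ y ≤ f x := fun hy => h (by simpa [hinv] using hanti y (f x) hy)
      rw [hodot2 x y h, hodot2 y x h', Set.pair_comm]
  · intro x
    constructor
    · by_cases hx : x = bot
      · subst hx
        rw [hodot1 _ _ (by rw [ftop]), lbbot]
      · have h : ¬ x ≤ f top := by rw [ftop]; intro h; exact hx (le_antisymm h (hbot _))
        rw [hodot2 _ _ h]
        ext a
        simp only [lowerBounds_insert, lowerBounds_singleton, Set.mem_inter_iff,
          Set.mem_Iic, and_iff_left (htop a)]
    · by_cases hx : x = bot
      · subst hx
        rw [hodot1 _ _ (by rw [fbot]), lbbot]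
      · have h : ¬ top ≤ f x := by
          intro h
          have : f x = top := le_antisymm (htop _) h
          apply hx
          rw [← hinv x, this, ftop]
        rw [hodot2 _ _ h]
        ext a
        simp only [lowerBounds_insert, lowerBounds_singleton, Set.mem_inter_iff,
          Set.mem_Iic, and_iff_right (htop a)]
  · intro x y z
    constructor
    · ext a
      simp only [Set.mem_iInter, Set.mem_singleton_iff]
      constructor
      · intro h
        have := h bot (botmem x y)
        rwa [hodot1 bot z (hbot _), Set.mem_singleton_iff] at this
      · rintro rfl u _
        exact botmem u z
    · ext a
      simp only [Set.mem_iInter, Set.mem_singleton_iff]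
      constructor
      · intro h
        have := h bot (botmem y z)
        rwa [hodot1 x bot (by rw [fbot]; exact htop _), Set.mem_singleton_iff] at this
      · rintro rfl v _
        exact botmem x v
end

section
/- Let (P,≤,',0,1) be a strict Kleene poset and let a,b ∈ P. If a ≤ b and L(a',b) = {0}, then a = b. -/
/-- In a strict Kleene poset, if a ≤ b and L(a',b) = {0} then a = b. -/
theorem stmt_15 {P : Type*} [PartialOrder P] (f : P → P) (bot top : P)
    (hbot : ∀ x : P, bot ≤ x) (htop : ∀ x : P, x ≤ top)
    (hinv : ∀ x : P, f (f x) = x)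
    (hanti : ∀ x y : P, x ≤ y → f y ≤ f x)
    (hstrict : ∀ x y : P, x ≠ bot → x ≠ top → y ≠ bot → y ≠ top →
      lowerBounds {x, f x} = lowerBounds {y, f y})
    (hdist : ∀ x y z : P,
      lowerBounds (upperBounds {x, y} ∪ {z}) =
        lowerBounds (upperBounds (lowerBounds {x, z} ∪ lowerBounds {y, z})))
    (a b : P) (hab : a ≤ b) (h : lowerBounds {f a, b} = {bot}) : a = b := by
  have pairmem : ∀ x y t : P, t ≤ x → t ≤ y → t ∈ lowerBounds {x, y} := by
    intro x y t h1 h2 z hz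
    rcases hz with rfl | hz
    · exact h1
    · rw [Set.mem_singleton_iff] at hz; subst hz; exact h2
  have ftop : f bot = top := by
    refine le_antisymm (htop _) ?_
    have := hanti bot (f top) (hbot _)
    rwa [hinv] at this
  have pairub : ∀ x y t : P, x ≤ t → y ≤ t → t ∈ upperBounds {x, y} := by
    intro x y t h1 h2 z hz
    rcases hz with rfl | hz
    · exact h1
    · rw [Set.mem_singleton_iff] at hz; subst hz; exact h2
  by_cases hbt : b = top
  · have hfa : f a ∈ lowerBounds {f a, b} := pairmem _ _ _ le_rfl (hbt ▸ htop _)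
    rw [h, Set.mem_singleton_iff] at hfa
    have : f (f a) = f bot := congrArg f hfa
    rw [hinv, ftop] at this
    rw [this, hbt]
  by_cases hbb : b = bot
  · exact le_antisymm hab (hbb ▸ hbot a)
  by_cases hat : a = top
  · rw [hat]; exact (le_antisymm (htop b) (hat ▸ hab)).symm
  by_cases hab0 : a = bot
  · have hb : b ∈ lowerBounds {f a, b} := by
      refine pairmem _ _ _ ?_ le_rfl
      rw [hab0, ftop]; exact htop b
    rw [h, Set.mem_singleton_iff] at hb
    rw [hab0, hb]
  -- main case : a, b ∉ {bot, top}
  have hfab : f b ≤ f a := hanti a b hab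
  -- Step A: L(f b, b) ⊆ {bot}
  have hLfbb : ∀ t : P, t ≤ f b → t ≤ b → t = bot := by
    intro t h1 h2
    have hd1 := hdist (f b) (f a) b
    have htR : t ∈ lowerBounds (upperBounds
        (lowerBounds {f b, b} ∪ lowerBounds {f a, b})) := by
      intro u hu
      exact hu (Set.mem_union_left _ (pairmem _ _ _ h1 h2))
    rw [← hd1] at htR
    -- now deduce t ∈ lowerBounds {f a, b} = {bot}
    have ht1 : t ≤ f a := htR (Set.mem_union_left _ (pairub _ _ _ hfab le_rfl))
    have ht2 : t ≤ b := htR (Set.mem_union_right _ rfl)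
    have : t ∈ lowerBounds {f a, b} := pairmem _ _ _ ht1 ht2
    rwa [h, Set.mem_singleton_iff] at this
  -- Step B: L(a, f a) ⊆ {bot} via strictness
  have hLafa : ∀ t : P, t ≤ a → t ≤ f a → t = bot := by
    intro t h1 h2
    have hs := hstrict b a hbb hbt hab0 hat
    have : t ∈ lowerBounds {b, f b} := by
      rw [hs]; exact pairmem _ _ _ h1 h2
    exact hLfbb t (this (Set.mem_insert_iff.mpr (Or.inr rfl))) (this (Set.mem_insert _ _))
  -- Step C: U(f a, a) ⊆ {top}
  have hU : ∀ u : P, f a ≤ u → a ≤ u → u = top := by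
    intro u h1 h2
    have hfu1 : f u ≤ f a := hanti a u h2
    have hfu2 : f u ≤ a := by
      have := hanti (f a) u h1
      rwa [hinv] at this
    have hfubot : f u = bot := hLafa (f u) hfu2 hfu1
    have : f (f u) = f bot := congrArg f hfubot
    rwa [hinv, ftop] at this
  -- Step D: use distributivity with (f a, a, b) to get b ≤ a
  have hd2 := hdist (f a) a b
  have hbL : b ∈ lowerBounds (upperBounds {f a, a} ∪ {b}) := by
    intro y hy
    rcases hy with hy | hy
    · have hy1 : f a ≤ y := hy (Set.mem_insert _ _)
      have hy2 : a ≤ y := hy (Set.mem_insert_iff.mpr (Or.inr rfl))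
      rw [hU y hy1 hy2]; exact htop b
    · rw [Set.mem_singleton_iff] at hy; subst hy; exact le_rfl
  rw [hd2] at hbL
  have haU : a ∈ upperBounds (lowerBounds {f a, b} ∪ lowerBounds {a, b}) := by
    intro y hy
    rcases hy with hy | hy
    · rw [h, Set.mem_singleton_iff] at hy; subst hy; exact hbot a
    · exact hy (Set.mem_insert _ _)
  exact le_antisymm hab (hbL haU)
end

section
/- Let Q = (Q,≤) be a poset and a ∈ Q. Then the twist construction P_a(Q), with the componentwise-twisted order and the operation (x,y)' := (y,x), is a pseudo-Kleene poset with fixed point (a,a): the operation ' maps P_a(Q) to itself, is an antitone involution on P_a(Q), satisfies (a,a)' = (a,a) with (a,a) ∈ P_a(Q), and L(p,p') ≤ U(q,q') holds for all p,q ∈ P_a(Q) (where L and U are taken in P_a(Q)). -/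
/-- The twist construction: P_a(Q) := {(x,y) ∈ Q² : L(x,y) ≤ a ≤ U(x,y)}, viewed as a
subset of Q × Qᵒᵈ so that the induced order is the componentwise-twisted order
(x,y) ≤ (z,v) iff x ≤ z and v ≤ y. -/
def twistSet (Q : Type*) [PartialOrder Q] (a : Q) : Set (Q × Qᵒᵈ) :=
  {p | (∀ z : Q, z ≤ p.1 → z ≤ OrderDual.ofDual p.2 → z ≤ a) ∧
       (∀ z : Q, p.1 ≤ z → OrderDual.ofDual p.2 ≤ z → a ≤ z)}

/-- The involution (x,y)' := (y,x) on P_a(Q). -/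
def twistNeg (Q : Type*) [PartialOrder Q] (a : Q) (p : ↥(twistSet Q a)) :
    ↥(twistSet Q a) :=
  ⟨(OrderDual.ofDual p.1.2, OrderDual.toDual p.1.1),
    fun z h1 h2 => p.2.1 z h2 h1, fun z h1 h2 => p.2.2 z h2 h1⟩

/-- The diagonal element (a,a) of P_a(Q). -/
def twistDiag (Q : Type*) [PartialOrder Q] (a : Q) : ↥(twistSet Q a) :=
  ⟨(a, OrderDual.toDual a), fun _ h _ => h, fun _ h _ => h⟩

/-- P_a(Q) with the twisted order and the involution (x,y)' := (y,x) is a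
pseudo-Kleene poset with fixed point (a,a). -/
theorem stmt_16 {Q : Type*} [PartialOrder Q] (a : Q) :
    (∀ p : ↥(twistSet Q a), twistNeg Q a (twistNeg Q a p) = p) ∧
    (∀ p q : ↥(twistSet Q a), p ≤ q → twistNeg Q a q ≤ twistNeg Q a p) ∧
    twistNeg Q a (twistDiag Q a) = twistDiag Q a ∧
    (∀ p q : ↥(twistSet Q a),
      ∀ u ∈ lowerBounds {p, twistNeg Q a p},
      ∀ v ∈ upperBounds {q, twistNeg Q a q}, u ≤ v) := by
  refine ⟨fun p => rfl, fun p q h => ⟨h.2, h.1⟩, rfl, ?_⟩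
  intro p q u hu v hv
  have hu1 := hu (Set.mem_insert _ _)
  have hu2 := hu (Set.mem_insert_iff.mpr (Or.inr rfl))
  have hv1 := hv (Set.mem_insert _ _)
  have hv2 := hv (Set.mem_insert_iff.mpr (Or.inr rfl))
  have hua : u.1.1 ≤ a := p.2.1 u.1.1 hu1.1 hu2.1
  have hau : a ≤ OrderDual.ofDual u.1.2 := p.2.2 _ hu2.2 hu1.2
  have hav : a ≤ v.1.1 := q.2.2 v.1.1 hv1.1 hv2.1
  have hva : OrderDual.ofDual v.1.2 ≤ a := q.2.1 _ hv2.2 hv1.2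
  exact ⟨hua.trans hav, (hva.trans hau : (OrderDual.ofDual v.1.2 : Q) ≤ _)⟩
end
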